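/- arXiv:1903.08995 — 3 statements merged into one kernel-verified Lean document; each statement's English description precedes it below -/
import Mathlib

section
/- Let γ be a unit-speed slant curve in an S-manifold with Δ⊥H = λΣ_αξ_α for a nowhere-zero function λ. Then γ is a Legendre curve, i.e., η^α(T) = 0 for each α. -/
/-!
Vector fields along a unit-speed Frenet curve `γ` in a Riemannian manifold are
modelled as functions `ℝ → V` (`V` the typical tangent space, via a parallel
trivialization); `D` is the covariant derivative `∇_T` along the curve, which, on differentiable
fields, is additive, satisfies the Leibniz rule and is compatible with the metric.
`E 1, …, E r` is the Frenet frame (`E 1 = T` the unit tangent) and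
`κ 1, …, κ (r-1)` are the curvatures, satisfying the Frenet equations. -/
structure FrenetCurve (V : Type*) [NormedAddCommGroup V] [InnerProductSpace ℝ V] where
  /-- covariant derivative along the curve -/
  D : (ℝ → V) → (ℝ → V)
  D_add : ∀ X Y, Differentiable ℝ X → Differentiable ℝ Y → D (X + Y) = D X + D Y
  D_smul : ∀ (f : ℝ → ℝ) (X : ℝ → V), Differentiable ℝ f → Differentiable ℝ X →
    D (fun t => f t • X t) = fun t => deriv f t • X t + f t • D X t
  metric_compat : ∀ X Y : ℝ → V, Differentiable ℝ X → Differentiable ℝ Y →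
    (deriv fun t => (inner ℝ (X t) (Y t) : ℝ)) =
      fun t => (inner ℝ (D X t) (Y t) : ℝ) + (inner ℝ (X t) (D Y t) : ℝ)
  /-- osculating order -/
  r : ℕ
  r_pos : 1 ≤ r
  /-- Frenet frame `E 1, …, E r` -/
  E : ℕ → ℝ → V
  /-- the frame fields are differentiable along the curve -/
  E_diff : ∀ i, Differentiable ℝ (E i)
  /-- curvatures `κ 1, …, κ (r-1)` -/
  κ : ℕ → ℝ → ℝ
  κ_smooth : ∀ i, ContDiff ℝ (⊤ : ℕ∞) (κ i)
  κ_pos : ∀ i t, 1 ≤ i → i < r → 0 < κ i t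
  orthonormal : ∀ i j t, 1 ≤ i → i ≤ r → 1 ≤ j → j ≤ r →
    (inner ℝ (E i t) (E j t) : ℝ) = if i = j then 1 else 0
  frenet_first : 2 ≤ r → D (E 1) = fun t => κ 1 t • E 2 t
  frenet_geodesic : r = 1 → D (E 1) = 0
  frenet_mid : ∀ i, 2 ≤ i → i < r →
    D (E i) = fun t => (-κ (i - 1) t) • E (i - 1) t + κ i t • E (i + 1) t
  frenet_last : 2 ≤ r → D (E r) = fun t => (-κ (r - 1) t) • E (r - 1) t

/-- The connection in the normal bundle along the curve: the projection of `∇_T X`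
onto the orthogonal complement of the unit tangent `T = E 1`. -/
def FrenetCurve.Dperp {V : Type*} [NormedAddCommGroup V] [InnerProductSpace ℝ V]
    (c : FrenetCurve V) (X : ℝ → V) : ℝ → V :=
  fun t => c.D X t - (inner ℝ (c.D X t) (c.E 1 t) : ℝ) • c.E 1 t

open scoped BigOperators

/-- A unit-speed Frenet curve in an `S`-manifold with structure tensors
`(φ, ξ_α, η^α, g)`, `α ∈ {1,…,s}`: the structure vector fields `ξ_α` and the
`(1,1)`-tensor `φ` are restricted along the curve (`Phi t` is `φ` at `γ t`),
`η^α(X) = g(X, ξ_α)`, and the `S`-structure identities hold, in particular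
`∇_X ξ_α = −φX` and `(∇_T φ)Y = Σ_α {g(φT,φY)ξ_α + η^α(Y)φ²T}`. -/
structure SCurve (V : Type*) [NormedAddCommGroup V] [InnerProductSpace ℝ V]
    (s : ℕ) extends FrenetCurve V where
  /-- the structure vector fields `ξ_α` along the curve -/
  xi : Fin s → ℝ → V
  /-- the fields `ξ_α` are differentiable along the curve -/
  xi_diff : ∀ α, Differentiable ℝ (xi α)
  /-- the tensor `φ` along the curve -/
  Phi : ℝ → V →ₗ[ℝ] V
  xi_orthonormal : ∀ α β t, (inner ℝ (xi α t) (xi β t) : ℝ) = if α = β then 1 else 0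
  phi_xi : ∀ α t, Phi t (xi α t) = 0
  eta_phi : ∀ (t : ℝ) (x : V) (α : Fin s), (inner ℝ (Phi t x) (xi α t) : ℝ) = 0
  phi_sq : ∀ (t : ℝ) (x : V),
    Phi t (Phi t x) = -x + ∑ α, (inner ℝ x (xi α t) : ℝ) • xi α t
  phi_metric : ∀ (t : ℝ) (x y : V), (inner ℝ (Phi t x) (Phi t y) : ℝ) =
    (inner ℝ x y : ℝ) - ∑ α, (inner ℝ x (xi α t) : ℝ) * (inner ℝ y (xi α t) : ℝ)
  phi_skew : ∀ (t : ℝ) (x y : V), (inner ℝ x (Phi t y) : ℝ) = -(inner ℝ (Phi t x) y : ℝ)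
  /-- `∇_T ξ_α = −φT` -/
  D_xi : ∀ α, D (fun t => xi α t) = fun t => -(Phi t (E 1 t))
  /-- `∇_T (φX) = (∇_T φ)X + φ(∇_T X)` with
  `(∇_T φ)X = Σ_α {g(φT,φX)ξ_α + η^α(X)φ²T}` -/
  D_phi : ∀ X : ℝ → V, Differentiable ℝ X → D (fun t => Phi t (X t)) = fun t =>
    (∑ α, ((inner ℝ (Phi t (E 1 t)) (Phi t (X t)) : ℝ) • xi α t +
      (inner ℝ (X t) (xi α t) : ℝ) • Phi t (Phi t (E 1 t)))) + Phi t (D X t)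

/-- `γ` is a slant curve with contact angle `θ`: `η^α(T) = cos θ` for all `α`. -/
def SCurve.IsSlant {V : Type*} [NormedAddCommGroup V] [InnerProductSpace ℝ V]
    {s : ℕ} (c : SCurve V s) (θ : ℝ) : Prop :=
  ∀ (α : Fin s) (t : ℝ), (inner ℝ (c.E 1 t) (c.xi α t) : ℝ) = Real.cos θ

/-- `γ` is a Legendre curve: `η^α(T) = 0` for all `α`. -/
def SCurve.IsLegendre {V : Type*} [NormedAddCommGroup V] [InnerProductSpace ℝ V]
    {s : ℕ} (c : SCurve V s) : Prop :=
  ∀ (α : Fin s) (t : ℝ), (inner ℝ (c.E 1 t) (c.xi α t) : ℝ) = 0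

/-- If a unit-speed slant curve `γ` in an `S`-manifold satisfies
`Δ⊥H = λ Σ_α ξ_α` with `λ` nowhere zero, then `γ` is a Legendre curve, i.e.
`η^α(T) = 0` for each `α`. -/
theorem cproper_normal_legendre {V : Type*} [NormedAddCommGroup V]
    [InnerProductSpace ℝ V] [FiniteDimensional ℝ V] {m s : ℕ} (hs : 1 ≤ s)
    (hdim : Module.finrank ℝ V = 2 * m + s)
    (c : SCurve V s) (θ : ℝ) (hslant : c.IsSlant θ)
    (lam : ℝ → ℝ) (hlam : ∀ t, lam t ≠ 0)
    (hC : (fun t => -(c.Dperp (c.Dperp (c.Dperp (c.E 1))) t)) =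
      fun t => lam t • ∑ α, c.xi α t) :
    c.IsLegendre := by
  have hperp : ∀ (X : ℝ → V) (t : ℝ), (inner ℝ (c.Dperp X t) (c.E 1 t) : ℝ) = 0 := by
    intro X t
    have h11 : (inner ℝ (c.E 1 t) (c.E 1 t) : ℝ) = 1 := by
      have := c.orthonormal 1 1 t le_rfl c.r_pos le_rfl c.r_pos
      simpa using this
    simp [FrenetCurve.Dperp, inner_sub_left, real_inner_smul_left, h11,
      (real_inner_self_eq_norm_sq (c.E 1 t)).symm.trans h11]
  intro α t
  have h := congrFun hC t
  have h2 : (inner ℝ ((lam t • ∑ β, c.xi β t : V)) (c.E 1 t) : ℝ) = 0 := by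
    rw [← h]
    simpa using hperp (c.Dperp (c.Dperp (c.E 1))) t
  have h3 : (∑ β : Fin s, (inner ℝ (c.xi β t) (c.E 1 t) : ℝ)) = (s : ℝ) * Real.cos θ := by
    rw [Finset.sum_congr rfl (fun β _ => by rw [real_inner_comm, hslant β t])]
    simp [mul_comm]
  rw [real_inner_smul_left, sum_inner, h3] at h2
  have hs' : (s : ℝ) ≠ 0 := Nat.cast_ne_zero.mpr (by omega)
  have hcos : Real.cos θ = 0 := by
    rcases mul_eq_zero.mp h2 with h | h
    · exact absurd h (hlam t)
    · rcases mul_eq_zero.mp h with h | h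
      · exact absurd h hs'
      · exact h
  rw [hslant α t, hcos]
end

section
/- In an S-manifold, a unit-speed slant curve γ with κ₂ = 0 that satisfies ΔH = λΣ_αξ_α with λ nowhere zero leads to a contradiction; hence every C-proper slant curve (in the tangent bundle) has κ₂ ≠ 0. -/
open scoped BigOperators

section Aux

variable {V : Type*} [NormedAddCommGroup V] [InnerProductSpace ℝ V]

lemma FrenetCurve.D_zero (c : FrenetCurve V) : c.D 0 = 0 := by
  have h := c.D_add 0 0 differentiable_zero differentiable_zero
  rw [add_zero] at h
  exact (left_eq_add.mp h)

lemma FrenetCurve.D_sum (c : FrenetCurve V) {ι : Type*} (s : Finset ι) (X : ι → ℝ → V)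
    (hX : ∀ i, Differentiable ℝ (X i)) :
    c.D (fun t => ∑ i ∈ s, X i t) = fun t => ∑ i ∈ s, c.D (X i) t := by
  classical
  induction s using Finset.induction_on with
  | empty => simp only [Finset.sum_empty]; exact c.D_zero
  | @insert a s ha ih =>
    simp only [Finset.sum_insert ha]
    have h2 : c.D (fun t => X a t + ∑ i ∈ s, X i t)
        = c.D (X a) + c.D (fun t => ∑ i ∈ s, X i t) :=
      c.D_add (X a) (fun t => ∑ i ∈ s, X i t) (hX a)
        (Differentiable.fun_sum fun i _ => hX i)
    rw [h2, ih]
    rfl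

lemma FrenetCurve.D_const_smul (c : FrenetCurve V) (a : ℝ) (X : ℝ → V)
    (hX : Differentiable ℝ X) :
    c.D (fun t => a • X t) = fun t => a • c.D X t := by
  have h := c.D_smul (fun _ => a) X (differentiable_const a) hX
  simpa using h

lemma FrenetCurve.span2 (c : FrenetCurve V) (hr : c.r = 2) (g h : ℝ → ℝ)
    (hg : ContDiff ℝ (⊤ : ℕ∞) g) (hh : ContDiff ℝ (⊤ : ℕ∞) h) :
    ∃ g' h' : ℝ → ℝ, ContDiff ℝ (⊤ : ℕ∞) g' ∧ ContDiff ℝ (⊤ : ℕ∞) h' ∧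
      c.D (fun t => g t • c.E 1 t + h t • c.E 2 t) =
        fun t => g' t • c.E 1 t + h' t • c.E 2 t := by
  have hE1 : c.D (c.E 1) = fun t => c.κ 1 t • c.E 2 t := c.frenet_first (by omega)
  have hE2 : c.D (c.E 2) = fun t => (-c.κ 1 t) • c.E 1 t := by
    have h := c.frenet_last (by omega)
    rw [hr] at h
    simpa using h
  have hg' := contDiff_infty_iff_deriv.mp hg
  have hh' := contDiff_infty_iff_deriv.mp hh
  refine ⟨fun t => deriv g t - h t * c.κ 1 t, fun t => deriv h t + g t * c.κ 1 t,
    hg'.2.sub (hh.mul (c.κ_smooth 1)), hh'.2.add (hg.mul (c.κ_smooth 1)), ?_⟩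
  have h2 : c.D (fun t => g t • c.E 1 t + h t • c.E 2 t)
      = (fun t => deriv g t • c.E 1 t + g t • c.D (c.E 1) t)
        + (fun t => deriv h t • c.E 2 t + h t • c.D (c.E 2) t) := by
    have h3 := c.D_add (fun t => g t • c.E 1 t) (fun t => h t • c.E 2 t)
      (hg'.1.smul (c.E_diff 1)) (hh'.1.smul (c.E_diff 2))
    rw [c.D_smul g (c.E 1) hg'.1 (c.E_diff 1), c.D_smul h (c.E 2) hh'.1 (c.E_diff 2)] at h3
    exact h3
  rw [h2, hE1, hE2]
  funext t
  simp only [Pi.add_apply]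
  module

end Aux

/-- In an `S`-manifold, a unit-speed slant curve with `κ₂ = 0` satisfying
`ΔH = λ Σ_α ξ_α` with `λ` nowhere zero leads to a contradiction; hence every
`C`-proper slant curve (in the tangent bundle) has `κ₂ ≠ 0`. -/
theorem cproper_tangent_kappa2_ne_zero {V : Type*} [NormedAddCommGroup V]
    [InnerProductSpace ℝ V] [FiniteDimensional ℝ V] {m s : ℕ} (hs : 1 ≤ s)
    (hdim : Module.finrank ℝ V = 2 * m + s)
    (c : SCurve V s) (θ : ℝ) (hslant : c.IsSlant θ)
    (lam : ℝ → ℝ) (hlam : ∀ t, lam t ≠ 0)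
    (hC : (fun t => -(c.D (c.D (c.D (c.E 1))) t)) = fun t => lam t • ∑ α, c.xi α t)
    (hκ2 : ∀ t, c.κ 2 t = 0) :
    False := by
  classical
  have hWW : ∀ t : ℝ, (inner ℝ (∑ α, c.xi α t) (∑ α, c.xi α t) : ℝ) = s := by
    intro t
    rw [sum_inner]; simp [inner_sum, c.xi_orthonormal]
  have hrle : c.r ≤ 2 := by
    by_contra h
    have h2 := c.κ_pos 2 0 (by omega) (by omega)
    rw [hκ2 0] at h2
    exact lt_irrefl 0 h2
  have hs1 : (1:ℝ) ≤ (s:ℝ) := by exact_mod_cast hs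
  have hrge : 1 ≤ c.r := c.r_pos
  rcases (by omega : c.r = 1 ∨ c.r = 2) with hr | hr
  · -- geodesic case
    have h0 : c.D (c.E 1) = 0 := c.frenet_geodesic hr
    have h3 : c.D (c.D (c.D (c.E 1))) = 0 := by
      rw [h0, c.toFrenetCurve.D_zero, c.toFrenetCurve.D_zero]
    have h := congrFun hC 0
    rw [h3] at h
    simp only [Pi.zero_apply, neg_zero] at h
    have hW0 : (∑ α, c.xi α 0) = 0 := by
      rcases smul_eq_zero.mp h.symm with h' | h'
      · exact absurd h' (hlam 0)
      · exact h'
    have h4 := hWW 0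
    rw [hW0, inner_zero_left] at h4
    linarith
  · -- r = 2 case
    have hr2 : (2:ℕ) ≤ c.r := hr.ge
    have hE1 : c.D (c.E 1) = fun t => c.κ 1 t • c.E 2 t := c.frenet_first hr2
    have hE2 : c.D (c.E 2) = fun t => (-c.κ 1 t) • c.E 1 t := by
      have h := c.frenet_last hr2
      rw [hr] at h
      simpa using h
    have o11 : ∀ t, (inner ℝ (c.E 1 t) (c.E 1 t) : ℝ) = 1 := fun t => by
      simpa using c.orthonormal 1 1 t le_rfl (by omega) le_rfl (by omega)
    have o12 : ∀ t, (inner ℝ (c.E 1 t) (c.E 2 t) : ℝ) = 0 := fun t => by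
      simpa using c.orthonormal 1 2 t le_rfl (by omega) (by omega) hr2
    have o22 : ∀ t, (inner ℝ (c.E 2 t) (c.E 2 t) : ℝ) = 1 := fun t => by
      simpa using c.orthonormal 2 2 t (by omega) hr2 (by omega) hr2
    have hκpos : ∀ t, 0 < c.κ 1 t := fun t => c.κ_pos 1 t le_rfl (by omega)
    have hWE1 : ∀ t, (inner ℝ (∑ α, c.xi α t) (c.E 1 t) : ℝ) = (s:ℝ) * Real.cos θ := by
      intro t
      have h : ∀ α : Fin s, (inner ℝ (c.xi α t) (c.E 1 t) : ℝ) = Real.cos θ := fun α => by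
        rw [real_inner_comm]; exact hslant α t
      simp [sum_inner, h, Finset.sum_const, Finset.card_univ, nsmul_eq_mul]
    have hDW : c.D (fun t => ∑ α, c.xi α t)
        = fun t => -((s:ℝ) • c.Phi t (c.E 1 t)) := by
      rw [c.toFrenetCurve.D_sum Finset.univ (fun α => fun t => c.xi α t) (fun α => c.xi_diff α)]
      funext t
      simp only [c.D_xi, Finset.sum_const, Finset.card_univ, Fintype.card_fin, smul_neg]
      rw [← Nat.cast_smul_eq_nsmul ℝ s]
    have hphiTT : ∀ t, (inner ℝ (c.Phi t (c.E 1 t)) (c.E 1 t) : ℝ) = 0 := by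
      intro t
      have h := c.phi_skew t (c.E 1 t) (c.E 1 t)
      rw [real_inner_comm] at h
      linarith
    have hWE2 : ∀ t, (inner ℝ (∑ α, c.xi α t) (c.E 2 t) : ℝ) = 0 := by
      intro t
      have hconst : (fun t => (inner ℝ ((fun t => ∑ α, c.xi α t) t) (c.E 1 t) : ℝ))
          = fun _ => (s:ℝ) * Real.cos θ := funext fun t => hWE1 t
      have hder := congrFun (c.metric_compat (fun t => ∑ α, c.xi α t) (c.E 1)
        (Differentiable.fun_sum fun α _ => c.xi_diff α) (c.E_diff 1)) t
      rw [hconst, deriv_const, hDW, hE1] at hder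
      simp only at hder
      rw [inner_neg_left, real_inner_smul_left, hphiTT, real_inner_smul_right] at hder
      have hκ := (hκpos t).ne'
      have : c.κ 1 t * (inner ℝ (∑ α, c.xi α t) (c.E 2 t) : ℝ) = 0 := by linarith
      rcases mul_eq_zero.mp this with h' | h'
      · exact absurd h' hκ
      · exact h'
    obtain ⟨g1, h1, hg1, hh1, H1⟩ := c.toFrenetCurve.span2 hr (fun _ => (0:ℝ)) (c.κ 1)
        contDiff_const (c.κ_smooth 1)
    have hD1 : c.D (c.E 1) = fun t => (0:ℝ) • c.E 1 t + c.κ 1 t • c.E 2 t := by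
      rw [hE1]; funext t; simp
    have hD2 : c.D (c.D (c.E 1)) = fun t => g1 t • c.E 1 t + h1 t • c.E 2 t := by
      rw [hD1]; exact H1
    obtain ⟨g2, h2, _, _, H2⟩ := c.toFrenetCurve.span2 hr g1 h1 hg1 hh1
    have hD3 : c.D (c.D (c.D (c.E 1))) = fun t => g2 t • c.E 1 t + h2 t • c.E 2 t := by
      rw [hD2]; exact H2
    have hCt : ∀ t, lam t • (∑ α, c.xi α t) = -(g2 t • c.E 1 t + h2 t • c.E 2 t) := by
      intro t
      have h := congrFun hC t
      rw [hD3] at h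
      exact h.symm
    have hh2 : ∀ t, h2 t = 0 := by
      intro t
      have h := congrArg (fun v => (inner ℝ v (c.E 2 t) : ℝ)) (hCt t)
      simp only [real_inner_smul_left, inner_neg_left, inner_add_left, hWE2 t,
        o12 t, o22 t, mul_zero, mul_one] at h
      linarith
    have hg2 : ∀ t, g2 t = -(lam t * ((s:ℝ) * Real.cos θ)) := by
      intro t
      have h := congrArg (fun v => (inner ℝ v (c.E 1 t) : ℝ)) (hCt t)
      simp only [real_inner_smul_left, inner_neg_left, inner_add_left, hWE1 t,
        o11 t, mul_one] at h
      have h12 : (inner ℝ (c.E 2 t) (c.E 1 t) : ℝ) = 0 := by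
        rw [real_inner_comm]; exact o12 t
      rw [h12] at h
      linarith
    have hWeq : ∀ t, (∑ α, c.xi α t) = ((s:ℝ) * Real.cos θ) • c.E 1 t := by
      intro t
      have h := hCt t
      rw [hh2 t, hg2 t, zero_smul, add_zero, neg_smul, neg_neg] at h
      have h' : lam t • (∑ α, c.xi α t)
          = lam t • (((s:ℝ) * Real.cos θ) • c.E 1 t) := by
        rw [h, smul_smul]
      exact smul_right_injective V (hlam t) h'
    have hcs : ((s:ℝ) * Real.cos θ) * ((s:ℝ) * Real.cos θ) = s := by
      have h := hWW 0
      rw [hWeq 0, real_inner_smul_left, real_inner_smul_right, o11 0, mul_one] at h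
      exact h
    have hscos_ne : (s:ℝ) * Real.cos θ ≠ 0 := by
      intro h
      rw [h, zero_mul] at hcs
      linarith
    have hphiT : ∀ t, c.Phi t (c.E 1 t) = 0 := by
      intro t
      have h : (inner ℝ (c.Phi t (c.E 1 t)) (c.Phi t (c.E 1 t)) : ℝ) = 0 := by
        rw [c.phi_metric, o11 t]
        have hη : ∀ α : Fin s, (inner ℝ (c.E 1 t) (c.xi α t) : ℝ) = Real.cos θ :=
          fun α => hslant α t
        simp only [hη, Finset.sum_const, Finset.card_univ, Fintype.card_fin,
          nsmul_eq_mul]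
        nlinarith [hcs, hs1]
      exact inner_self_eq_zero.mp h
    have h0 : c.D (fun t => ∑ α, c.xi α t)
        = fun t => (((s:ℝ) * Real.cos θ) * c.κ 1 t) • c.E 2 t := by
      have hfun : (fun t => ∑ α, c.xi α t)
          = fun t => ((s:ℝ) * Real.cos θ) • c.E 1 t := funext hWeq
      rw [hfun, c.toFrenetCurve.D_const_smul _ _ (c.E_diff 1), hE1]
      funext t
      rw [smul_smul]
    have hfin := congrFun (h0.symm.trans hDW) 0
    rw [hphiT 0, smul_zero, neg_zero] at hfin
    have hz : ((s:ℝ) * Real.cos θ) * c.κ 1 0 = 0 := by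
      have h' := congrArg (fun v => (inner ℝ v (c.E 2 0) : ℝ)) hfin
      simp only [real_inner_smul_left, o22 0, inner_zero_left, mul_one] at h'; exact h'
    exact absurd hz (mul_ne_zero hscos_ne (hκpos 0).ne')
end

section
/- If f: I → ℝ is defined by f = κ₁ with κ₁(t) = 2e^{2t} and κ₂ = 2 constant, then κ₁κ₂² − κ₁″ = 0; consequently a unit-speed Legendre curve in an S-manifold with s = 4 having these curvatures, osculating order r = 3, φT = E₂ and E₃ = (1/2)Σ_{α=1}^4 ξ_α satisfies Δ⊥H = −8e^{2t} Σ_{α=1}^4 ξ_α, i.e., it is C-proper in the normal bundle with λ = −8e^{2t}. -/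
open scoped BigOperators

private lemma deriv_aexp (a : ℝ) :
    deriv (fun t => a * Real.exp (2 * t)) = fun t => (2 * a) * Real.exp (2 * t) := by
  funext t
  have h : HasDerivAt (fun t => a * Real.exp (2 * t)) ((2 * a) * Real.exp (2 * t)) t := by
    have h1 : HasDerivAt (fun x : ℝ => 2 * x) 2 t := by
      simpa using (hasDerivAt_id t).const_mul (2 : ℝ)
    have := (h1.exp.const_mul a)
    rw [show (2 * a) * Real.exp (2 * t) = a * (Real.exp (2 * t) * 2) by ring]; exact this
  exact h.deriv

/-- With `κ₁(t) = 2e^{2t}` and `κ₂ = 2` one has `κ₁κ₂² − κ₁″ = 0`; consequently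
a unit-speed Legendre curve in an `S`-manifold with `s = 4`, osculating order
`r = 3`, these curvatures, `φT = E₂` and `E₃ = (1/2) Σ_{α=1}^4 ξ_α` satisfies
`Δ⊥H = −8e^{2t} Σ_{α=1}^4 ξ_α`, i.e. it is `C`-proper in the normal bundle with
`λ = −8e^{2t}`. -/
theorem example_cproper_normal {V : Type*} [NormedAddCommGroup V]
    [InnerProductSpace ℝ V] [FiniteDimensional ℝ V] {m : ℕ}
    (hdim : Module.finrank ℝ V = 2 * m + 4)
    (c : SCurve V 4) (hLeg : c.IsLegendre)
    (hκ1 : c.κ 1 = fun t => 2 * Real.exp (2 * t))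
    (hκ2 : c.κ 2 = fun _ => 2)
    (hr : c.r = 3)
    (hphiT : ∀ t : ℝ, c.Phi t (c.E 1 t) = c.E 2 t)
    (hE3 : ∀ t : ℝ, c.E 3 t = (1 / 2 : ℝ) • ∑ α, c.xi α t) :
    (∀ t : ℝ, c.κ 1 t * (c.κ 2 t) ^ 2 - deriv (deriv (c.κ 1)) t = 0) ∧
    (∀ t : ℝ, -(c.Dperp (c.Dperp (c.Dperp (c.E 1))) t) =
      (-8 * Real.exp (2 * t)) • ∑ α, c.xi α t) := by
  -- orthonormality facts
  have ho : ∀ (i j : ℕ) (t : ℝ), 1 ≤ i → i ≤ 3 → 1 ≤ j → j ≤ 3 →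
      (inner ℝ (c.E i t) (c.E j t) : ℝ) = if i = j then 1 else 0 := by
    intro i j t h1 h2 h3 h4
    exact c.toFrenetCurve.orthonormal i j t h1 (by omega) h3 (by omega)
  have e11 : ∀ t, (inner ℝ (c.E 1 t) (c.E 1 t) : ℝ) = 1 := by
    intro t; simpa using ho 1 1 t (by norm_num) (by norm_num) (by norm_num) (by norm_num)
  have e21 : ∀ t, (inner ℝ (c.E 2 t) (c.E 1 t) : ℝ) = 0 := by
    intro t; simpa using ho 2 1 t (by norm_num) (by norm_num) (by norm_num) (by norm_num)
  have e31 : ∀ t, (inner ℝ (c.E 3 t) (c.E 1 t) : ℝ) = 0 := by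
    intro t; simpa using ho 3 1 t (by norm_num) (by norm_num) (by norm_num) (by norm_num)
  -- Frenet equations specialized
  have hDE1 : c.D (c.E 1) = fun t => (2 * Real.exp (2 * t)) • c.E 2 t := by
    rw [c.toFrenetCurve.frenet_first (by omega), hκ1]
  have hDE2 : c.D (c.E 2) = fun t =>
      (-(2 * Real.exp (2 * t))) • c.E 1 t + (2 : ℝ) • c.E 3 t := by
    have h := c.toFrenetCurve.frenet_mid 2 le_rfl (by omega)
    rw [h]; funext t
    norm_num [hκ1, hκ2]
  have hDE3 : c.D (c.E 3) = fun t => (-(2 : ℝ)) • c.E 2 t := by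
    have h := c.toFrenetCurve.frenet_last (by omega)
    rw [hr] at h
    rw [h]; funext t
    norm_num [hκ2]
  -- first claim
  have hd1 : deriv (c.κ 1) = fun t => 4 * Real.exp (2 * t) := by
    rw [hκ1, deriv_aexp]; norm_num
  have hd2 : deriv (deriv (c.κ 1)) = fun t => 8 * Real.exp (2 * t) := by
    rw [hd1, deriv_aexp]; norm_num
  -- Dperp computations
  have h1 : c.Dperp (c.E 1) = fun t => (2 * Real.exp (2 * t)) • c.E 2 t := by
    funext t
    simp only [FrenetCurve.Dperp, hDE1, real_inner_smul_left, e21]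
    simp
  have h2 : c.Dperp (fun t => (2 * Real.exp (2 * t)) • c.E 2 t) =
      fun t => (4 * Real.exp (2 * t)) • c.E 2 t + (4 * Real.exp (2 * t)) • c.E 3 t := by
    have hD : c.D (fun t => (2 * Real.exp (2 * t)) • c.E 2 t) = fun t =>
        (4 * Real.exp (2 * t)) • c.E 2 t +
          (2 * Real.exp (2 * t)) • ((-(2 * Real.exp (2 * t))) • c.E 1 t + (2 : ℝ) • c.E 3 t) := by
      rw [c.toFrenetCurve.D_smul (fun t => 2 * Real.exp (2 * t)) (c.E 2) (by fun_prop) (c.E_diff 2), hDE2]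
      funext t
      rw [deriv_aexp]
      norm_num
    funext t
    simp only [FrenetCurve.Dperp, hD]
    rw [show ((4 * Real.exp (2 * t)) • c.E 2 t +
          (2 * Real.exp (2 * t)) • ((-(2 * Real.exp (2 * t))) • c.E 1 t + (2 : ℝ) • c.E 3 t)) =
        ((4 * Real.exp (2 * t)) • c.E 2 t + (4 * Real.exp (2 * t)) • c.E 3 t +
          (-(4 * Real.exp (2 * t) * Real.exp (2 * t))) • c.E 1 t) by
      simp [smul_smul]; module]
    rw [inner_add_left, inner_add_left, real_inner_smul_left, real_inner_smul_left,
      real_inner_smul_left, e21, e31, e11]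
    simp
  have h3 : c.Dperp (fun t => (4 * Real.exp (2 * t)) • c.E 2 t + (4 * Real.exp (2 * t)) • c.E 3 t) =
      fun t => (16 * Real.exp (2 * t)) • c.E 3 t := by
    have hsplit : (fun t => (4 * Real.exp (2 * t)) • c.E 2 t + (4 * Real.exp (2 * t)) • c.E 3 t) =
        (fun t => (4 * Real.exp (2 * t)) • c.E 2 t) + (fun t => (4 * Real.exp (2 * t)) • c.E 3 t) :=
      rfl
    have hD : c.D (fun t => (4 * Real.exp (2 * t)) • c.E 2 t + (4 * Real.exp (2 * t)) • c.E 3 t) =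
        fun t => (16 * Real.exp (2 * t)) • c.E 3 t +
          (-(4 * Real.exp (2 * t) * (2 * Real.exp (2 * t)))) • c.E 1 t := by
      rw [hsplit, c.toFrenetCurve.D_add (fun t => (4 * Real.exp (2 * t)) • c.E 2 t)
          (fun t => (4 * Real.exp (2 * t)) • c.E 3 t)
          (by have := c.E_diff 2; fun_prop) (by have := c.E_diff 3; fun_prop),
        c.toFrenetCurve.D_smul (fun t => 4 * Real.exp (2 * t)) (c.E 2) (by fun_prop) (c.E_diff 2),
        c.toFrenetCurve.D_smul (fun t => 4 * Real.exp (2 * t)) (c.E 3) (by fun_prop) (c.E_diff 3), hDE2, hDE3]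
      funext t
      rw [deriv_aexp]
      simp only [Pi.add_apply, smul_add, smul_smul, smul_neg, neg_smul]
      module
    funext t
    simp only [FrenetCurve.Dperp, hD]
    rw [inner_add_left, real_inner_smul_left, real_inner_smul_left, e31, e11]
    simp
  refine ⟨fun t => by rw [hd2]; simp only [hκ1, hκ2]; ring, ?_⟩
  intro t
  rw [h1, h2, h3]
  show -((16 * Real.exp (2 * t)) • c.E 3 t) = _
  rw [hE3 t, smul_smul, ← neg_smul]
  congr 1
  ring
end
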